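/- A nonempty subset Y of the space X_3 is locally closed and connected in the subspace topology if and only if Y is one of the eleven sets {4}, {2,4}, {3,4}, {2,3,4}, {1,2,3,4}, {1,2,3}, {1,2}, {1,3}, {1}, {2}, {3}. -/
import Mathlib


inductive Pt : Type
  | p1 | p2 | p3 | p4
  deriving DecidableEq

open Pt TopologicalSpace

def O1 : Set (Set Pt) :=
  {∅, {p4}, {p1, p4}, {p2, p4}, {p3, p4}, {p1, p2, p4}, {p1, p3, p4}, {p2, p3, p4}, Set.univ}
def O2 : Set (Set Pt) := {∅, {p4}, {p3, p4}, {p2, p3, p4}, {p1, p3, p4}, Set.univ}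
def O3 : Set (Set Pt) := {∅, {p4}, {p3, p4}, {p2, p4}, {p2, p3, p4}, Set.univ}
def O4 : Set (Set Pt) :=
  {∅, {p1}, {p2}, {p3}, {p1, p2}, {p1, p3}, {p2, p3}, {p1, p2, p3}, Set.univ}
def O5 : Set (Set Pt) := {∅, {p1}, {p2}, {p1, p2}, {p1, p2, p3}, Set.univ}
def O6 : Set (Set Pt) := {∅, {p3}, {p4}, {p3, p4}, {p1, p3, p4}, {p2, p3, p4}, Set.univ}
def O7 : Set (Set Pt) := {∅, {p1}, {p1, p2}, {p1, p2, p3}, Set.univ}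
def O8 : Set (Set Pt) :=
  {∅, {p1}, {p4}, {p1, p2}, {p1, p4}, {p1, p2, p3}, {p1, p2, p4}, Set.univ}
def O9 : Set (Set Pt) :=
  {∅, {p1}, {p3}, {p1, p3}, {p3, p4}, {p1, p2, p3}, {p1, p3, p4}, Set.univ}
def O10 : Set (Set Pt) :=
  {∅, {p2}, {p1, p2}, {p2, p3}, {p1, p2, p3}, {p2, p3, p4}, Set.univ}

def X1 : TopologicalSpace Pt := generateFrom O1
def X2 : TopologicalSpace Pt := generateFrom O2
def X3 : TopologicalSpace Pt := generateFrom O3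
def X4 : TopologicalSpace Pt := generateFrom O4
def X5 : TopologicalSpace Pt := generateFrom O5
def X6 : TopologicalSpace Pt := generateFrom O6
def X7 : TopologicalSpace Pt := generateFrom O7
def X8 : TopologicalSpace Pt := generateFrom O8
def X9 : TopologicalSpace Pt := generateFrom O9
def X10 : TopologicalSpace Pt := generateFrom O10

lemma Pt.forall_iff {q : Pt → Prop} : (∀ x : Pt, q x) ↔ q p1 ∧ q p2 ∧ q p3 ∧ q p4 :=
  ⟨fun h => ⟨h _, h _, h _, h _⟩, fun ⟨a, b, c, d⟩ x => by cases x <;> assumption⟩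

def P (s : Set Pt) : Prop :=
  (p1 ∈ s → p2 ∈ s ∧ p3 ∈ s ∧ p4 ∈ s) ∧ (p2 ∈ s → p4 ∈ s) ∧ (p3 ∈ s → p4 ∈ s)

lemma mem_O3_iff {s : Set Pt} : s ∈ O3 ↔ P s := by
  constructor
  · intro h
    simp only [O3, Set.mem_insert_iff, Set.mem_singleton_iff] at h
    rcases h with h | h | h | h | h | h <;> subst h <;> simp [P]
  · rintro ⟨h1, h2, h3⟩
    simp only [O3, Set.mem_insert_iff, Set.mem_singleton_iff, Set.ext_iff, Pt.forall_iff]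
    by_cases a1 : p1 ∈ s <;> by_cases a2 : p2 ∈ s <;> by_cases a3 : p3 ∈ s <;>
      by_cases a4 : p4 ∈ s <;> simp_all

lemma X3_open_iff {s : Set Pt} : @IsOpen Pt X3 s ↔ s ∈ O3 := by
  constructor
  · intro h
    have h' : TopologicalSpace.GenerateOpen O3 s := h
    clear h
    induction h' with
    | basic u hu => exact hu
    | univ =>
      rw [mem_O3_iff]
      exact ⟨fun _ => ⟨trivial, trivial, trivial⟩, fun _ => trivial, fun _ => trivial⟩
    | inter u v hu hv ihu ihv =>
      rw [mem_O3_iff] at *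
      obtain ⟨u1, u2, u3⟩ := ihu; obtain ⟨v1, v2, v3⟩ := ihv
      exact ⟨fun ⟨a, b⟩ => ⟨⟨(u1 a).1, (v1 b).1⟩, ⟨(u1 a).2.1, (v1 b).2.1⟩,
          ⟨(u1 a).2.2, (v1 b).2.2⟩⟩,
        fun ⟨a, b⟩ => ⟨u2 a, v2 b⟩, fun ⟨a, b⟩ => ⟨u3 a, v3 b⟩⟩
    | sUnion S hS ih =>
      rw [mem_O3_iff]
      refine ⟨?_, ?_, ?_⟩ <;> rintro ⟨t, htS, hpt⟩
      · have := (mem_O3_iff.mp (ih t htS)).1 hpt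
        exact ⟨⟨t, htS, this.1⟩, ⟨t, htS, this.2.1⟩, ⟨t, htS, this.2.2⟩⟩
      · exact ⟨t, htS, (mem_O3_iff.mp (ih t htS)).2.1 hpt⟩
      · exact ⟨t, htS, (mem_O3_iff.mp (ih t htS)).2.2 hpt⟩
  · exact fun h => TopologicalSpace.GenerateOpen.basic s h

lemma mem_p4_of_open {u : Set Pt} (hu : @IsOpen Pt X3 u) (hne : u.Nonempty) : p4 ∈ u := by
  obtain ⟨h1, h2, h3⟩ := mem_O3_iff.mp (X3_open_iff.mp hu)
  obtain ⟨x, hx⟩ := hne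
  cases x
  · exact (h1 hx).2.2
  · exact h2 hx
  · exact h3 hx
  · exact hx

lemma univ_of_p1_open {u : Set Pt} (hu : @IsOpen Pt X3 u) (h : p1 ∈ u) : u = Set.univ := by
  obtain ⟨h1, h2, h3⟩ := mem_O3_iff.mp (X3_open_iff.mp hu)
  ext x; cases x <;> simp [h, (h1 h).1, (h1 h).2.1, (h1 h).2.2]

lemma precon_of_p4 {Y : Set Pt} (h4 : p4 ∈ Y) : @IsPreconnected Pt X3 Y := by
  rintro u v hu hv _ ⟨x, _, hxu⟩ ⟨y, _, hyv⟩
  exact ⟨p4, h4, mem_p4_of_open hu ⟨x, hxu⟩, mem_p4_of_open hv ⟨y, hyv⟩⟩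

lemma precon_of_p1 {Y : Set Pt} (h1 : p1 ∈ Y) : @IsPreconnected Pt X3 Y := by
  rintro u v hu hv hcov ⟨x, hxY, hxu⟩ ⟨y, hyY, hyv⟩
  rcases hcov h1 with h | h
  · exact ⟨y, hyY, by rw [univ_of_p1_open hu h]; trivial, hyv⟩
  · exact ⟨x, hxY, hxu, by rw [univ_of_p1_open hv h]; trivial⟩

lemma lc_univ {Y : Set Pt} (h : @IsLocallyClosed Pt X3 Y) (h1 : p1 ∈ Y) (h4 : p4 ∈ Y) :
    Y = Set.univ := by
  obtain ⟨U, Z, hU, hZ, hYe⟩ := h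
  rw [hYe] at h1 h4
  have hUu : U = Set.univ := univ_of_p1_open hU h1.1
  have hZc : @IsOpen Pt X3 Zᶜ := hZ.isOpen_compl
  have hZe : Zᶜ = ∅ := by
    by_contra hc
    exact (mem_p4_of_open hZc (Set.nonempty_iff_ne_empty.mpr hc)) h4.2
  have hZu : Z = Set.univ := by rw [← compl_compl Z, hZe, Set.compl_empty]
  rw [hYe, hUu, hZu, Set.univ_inter]

lemma open3 {s : Set Pt} (h : s ∈ O3) : @IsOpen Pt X3 s := X3_open_iff.mpr h

lemma closed3 {s : Set Pt} (h : sᶜ ∈ O3) : @IsClosed Pt X3 s := by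
  letI := X3
  rw [show s = sᶜᶜ from (compl_compl s).symm, isClosed_compl_iff]
  exact open3 h

lemma lc_of_open {s : Set Pt} (h : @IsOpen Pt X3 s) : @IsLocallyClosed Pt X3 s :=
  ⟨s, Set.univ, h, @isClosed_univ Pt X3, (Set.inter_univ s).symm⟩

lemma lc_of_closed {s : Set Pt} (h : @IsClosed Pt X3 s) : @IsLocallyClosed Pt X3 s :=
  ⟨Set.univ, s, @isOpen_univ Pt X3, h, (Set.univ_inter s).symm⟩

/-- The nonempty, locally closed, connected subsets of X_3 are exactly the eleven
listed sets. -/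
theorem stmt9 :
    ∀ Y : Set Pt, Y.Nonempty →
      ((@IsLocallyClosed Pt X3 Y ∧ @IsConnected Pt X3 Y) ↔
        Y ∈ ({{p4}, {p2, p4}, {p3, p4}, {p2, p3, p4}, Set.univ, {p1, p2, p3},
          {p1, p2}, {p1, p3}, {p1}, {p2}, {p3}} : Set (Set Pt))) := by
  intro Y hne
  constructor
  · rintro ⟨hlc, -, hpc⟩
    by_cases a1 : p1 ∈ Y
    · by_cases a4 : p4 ∈ Y
      · have h := lc_univ hlc a1 a4
        subst h
        simp
      · simp only [Set.mem_insert_iff, Set.mem_singleton_iff, Set.ext_iff, Pt.forall_iff,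
          Set.mem_univ, Set.mem_empty_iff_false]
        by_cases a2 : p2 ∈ Y <;> by_cases a3 : p3 ∈ Y <;> simp_all
    · by_cases a4 : p4 ∈ Y
      · simp only [Set.mem_insert_iff, Set.mem_singleton_iff, Set.ext_iff, Pt.forall_iff,
          Set.mem_univ, Set.mem_empty_iff_false]
        by_cases a2 : p2 ∈ Y <;> by_cases a3 : p3 ∈ Y <;> simp_all
      · by_cases a2 : p2 ∈ Y <;> by_cases a3 : p3 ∈ Y
        · -- Y = {p2, p3}, not preconnected
          exfalso
          have h24 : @IsOpen Pt X3 ({p2, p4} : Set Pt) := open3 (by simp [O3])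
          have h34 : @IsOpen Pt X3 ({p3, p4} : Set Pt) := open3 (by simp [O3])
          obtain ⟨x, hxY, hx2, hx3⟩ := hpc {p2, p4} {p3, p4} h24 h34
            (fun x hx => by cases x <;> simp_all)
            ⟨p2, a2, by simp⟩ ⟨p3, a3, by simp⟩
          cases x <;> simp_all
        all_goals
          simp only [Set.mem_insert_iff, Set.mem_singleton_iff, Set.ext_iff, Pt.forall_iff,
            Set.mem_univ, Set.mem_empty_iff_false]
          obtain ⟨x, hx⟩ := hne; cases x <;> simp_all
  · intro h
    simp only [Set.mem_insert_iff, Set.mem_singleton_iff] at h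
    have c123 : ({p1, p2, p3}ᶜ : Set Pt) = {p4} := by ext x; cases x <;> simp
    have c12 : ({p1, p2}ᶜ : Set Pt) = {p3, p4} := by ext x; cases x <;> simp
    have c13 : ({p1, p3}ᶜ : Set Pt) = {p2, p4} := by ext x; cases x <;> simp
    have c1 : ({p1}ᶜ : Set Pt) = {p2, p3, p4} := by ext x; cases x <;> simp
    rcases h with h | h | h | h | h | h | h | h | h | h | h <;> subst h
    · exact ⟨lc_of_open (open3 (by simp [O3])), ⟨p4, by simp⟩, precon_of_p4 (by simp)⟩
    · exact ⟨lc_of_open (open3 (by simp [O3])), ⟨p4, by simp⟩, precon_of_p4 (by simp)⟩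
    · exact ⟨lc_of_open (open3 (by simp [O3])), ⟨p4, by simp⟩, precon_of_p4 (by simp)⟩
    · exact ⟨lc_of_open (open3 (by simp [O3])), ⟨p4, by simp⟩, precon_of_p4 (by simp)⟩
    · exact ⟨lc_of_open (open3 (by simp [O3])), ⟨p4, by simp⟩, precon_of_p4 (by simp)⟩
    · exact ⟨lc_of_closed (closed3 (by rw [c123]; simp [O3])), ⟨p1, by simp⟩,
        precon_of_p1 (by simp)⟩
    · exact ⟨lc_of_closed (closed3 (by rw [c12]; simp [O3])), ⟨p1, by simp⟩,
        precon_of_p1 (by simp)⟩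
    · exact ⟨lc_of_closed (closed3 (by rw [c13]; simp [O3])), ⟨p1, by simp⟩,
        precon_of_p1 (by simp)⟩
    · exact ⟨lc_of_closed (closed3 (by rw [c1]; simp [O3])), ⟨p1, by simp⟩,
        precon_of_p1 (by simp)⟩
    · exact ⟨⟨{p2, p4}, {p1, p2}, open3 (by simp [O3]), closed3 (by rw [c12]; simp [O3]),
        by ext x; cases x <;> simp⟩, ⟨p2, rfl⟩, @isPreconnected_singleton Pt X3 p2⟩
    · exact ⟨⟨{p3, p4}, {p1, p3}, open3 (by simp [O3]), closed3 (by rw [c13]; simp [O3]),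
        by ext x; cases x <;> simp⟩, ⟨p3, rfl⟩, @isPreconnected_singleton Pt X3 p3⟩
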